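/- Let d be a positive squarefree integer with d ≡ 1 (mod 4), n ≥ 1, and k ≥ 2. Let R = ℤ[√-d]/(2^k) with σ the ring endomorphism induced by conjugation, and let M = diag(1,…,1,-2) of size n+1. Then for every matrix X ∈ M_{n+1}(R) with X·M·σ(X)ᵀ = M, the element det(X)·σ(det(X)) of R is equal to the image of 1 or to the image of 1 + 2^{k-1}. -/
import Mathlib


open Matrix

/-- The quotient ring `ℤ[√-d]/(m)`. -/
abbrev Rq (d m : ℤ) : Type := Zsqrtd (-d) ⧸ Ideal.span {(m : Zsqrtd (-d))}

/-- Conjugation `a + b√-d ↦ a - b√-d` descends to the quotient `ℤ[√-d]/(m)`. -/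
noncomputable def conjQ (d m : ℤ) : Rq d m →+* Rq d m :=
  Ideal.quotientMap (Ideal.span {(m : Zsqrtd (-d))}) (starRingEnd (Zsqrtd (-d)))
    (by
      rw [Ideal.span_singleton_le_iff_mem, Ideal.mem_comap, map_intCast]
      exact Ideal.mem_span_singleton_self _)

/-- The diagonal matrix `diag(1, …, 1, -2)` of size `n+1`. -/
def Mmat (R : Type*) [Ring R] (n : ℕ) : Matrix (Fin (n + 1)) (Fin (n + 1)) R :=
  Matrix.diagonal fun i => if i = Fin.last n then -2 else 1

lemma det_Mmat (R : Type*) [CommRing R] (n : ℕ) : (Mmat R n).det = -2 := by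
  rw [Mmat, Matrix.det_diagonal]
  simp

lemma int_step (k : ℕ) (hk : 2 ≤ k) (m : ℤ) (h : (2:ℤ)^k ∣ 2*(m-1)) :
    (2:ℤ)^k ∣ m - 1 ∨ (2:ℤ)^k ∣ m - (1 + 2^(k-1)) := by
  have hk1 : k = (k-1) + 1 := by omega
  rw [hk1, pow_succ, mul_comm ((2:ℤ)^(k-1)) 2] at h
  have h2 : (2:ℤ)^(k-1) ∣ m - 1 := (mul_dvd_mul_iff_left (by norm_num : (2:ℤ) ≠ 0)).1 h
  obtain ⟨t, ht⟩ := h2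
  have hkk : (2:ℤ)^k = 2^(k-1)*2 := by rw [← pow_succ, Nat.sub_add_cancel (by omega)]
  rcases Int.even_or_odd t with ⟨s, hs⟩ | ⟨s, hs⟩
  · exact Or.inl ⟨s, by rw [hkk, ht, hs]; ring⟩
  · refine Or.inr ⟨s, ?_⟩
    have h3 : m - (1 + 2^(k-1)) = (m-1) - 2^(k-1) := by ring
    rw [hkk, h3, ht, hs]; ring

lemma cast_eq_cast (d : ℤ) (k : ℕ) (a b : ℤ) (h : (2:ℤ)^k ∣ a - b) :
    ((a : ℤ) : Rq d (2^k)) = ((b : ℤ) : Rq d (2^k)) := by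
  rw [← map_intCast (Ideal.Quotient.mk (Ideal.span {((2^k : ℤ) : Zsqrtd (-d))})) a,
    ← map_intCast (Ideal.Quotient.mk (Ideal.span {((2^k : ℤ) : Zsqrtd (-d))})) b,
    Ideal.Quotient.eq, Ideal.mem_span_singleton]
  rw [← Int.cast_sub]
  exact (Zsqrtd.intCast_dvd_intCast (d := -d) (2^k) (a-b)).2 h

/-- For every `X ∈ U(M, ℤ[√-d]/(2^k))`, the norm `det(X)·σ(det(X))` equals the image
of `1` or the image of `1 + 2^{k-1}`. -/
theorem norm_det_of_mem_U_M (d : ℤ) (hd : 0 < d) (hsf : Squarefree d) (hd4 : d % 4 = 1)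
    (n : ℕ) (hn : 1 ≤ n) (k : ℕ) (hk : 2 ≤ k)
    (X : Matrix (Fin (n + 1)) (Fin (n + 1)) (Rq d (2 ^ k)))
    (hX : X * Mmat (Rq d (2 ^ k)) n * (X.map (conjQ d (2 ^ k)))ᵀ = Mmat (Rq d (2 ^ k)) n) :
    X.det * conjQ d (2 ^ k) X.det = ((1 : ℤ) : Rq d (2 ^ k)) ∨
    X.det * conjQ d (2 ^ k) X.det = ((1 + 2 ^ (k - 1) : ℤ) : Rq d (2 ^ k)) := by
  -- determinant of hX
  have hdet := congrArg Matrix.det hX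
  rw [Matrix.det_mul, Matrix.det_mul, Matrix.det_transpose,
    show X.map ⇑(conjQ d (2^k)) = (conjQ d (2^k)).mapMatrix X from rfl,
    ← RingHom.map_det, det_Mmat] at hdet
  -- lift det X
  obtain ⟨w, hw⟩ := Ideal.Quotient.mk_surjective X.det
  have hσ : conjQ d (2^k) X.det = Ideal.Quotient.mk _ (star w) := by
    rw [← hw, conjQ, Ideal.quotientMap_mk]
    rfl
  set m : ℤ := Zsqrtd.norm w with hm
  have hN : X.det * conjQ d (2^k) X.det = ((m : ℤ) : Rq d (2^k)) := by
    rw [hσ, ← hw, ← _root_.map_mul, ← Zsqrtd.norm_eq_mul_conj]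
    exact map_intCast _ m
  -- hdet : ((m:ℤ):Rq) * -2 * _ = -2 ... careful of order
  have h2 : ((2 * (m - 1) : ℤ) : Rq d (2^k)) = 0 := by
    push_cast
    linear_combination -hdet - 2*hN
  -- turn into divisibility in ℤ√-d then ℤ
  have hdvd : ((2:ℤ)^k : ℤ) ∣ 2 * (m - 1) := by
    have := (Ideal.Quotient.eq_zero_iff_mem).1 h2
    rw [Ideal.mem_span_singleton] at this
    have : ((2^k : ℤ) : Zsqrtd (-d)) ∣ ((2 * (m-1) : ℤ) : Zsqrtd (-d)) := by
      exact_mod_cast this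
    exact (Zsqrtd.intCast_dvd_intCast (2^k) (2*(m-1))).1 this
  rcases int_step k hk m hdvd with h | h
  · exact Or.inl (by rw [hN]; exact cast_eq_cast d k m 1 h)
  · exact Or.inr (by rw [hN]; exact cast_eq_cast d k m (1 + 2^(k-1)) h)
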